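/- arXiv:1507.00290 — 2 statements merged into one kernel-verified Lean document; each statement's English description precedes it below -/
import Mathlib

section
/- Let K be a closed convex cone, and suppose (y_1,…,y_k) ∈ FR_{k+1}(K) satisfies A* y_i = 0, ⟨b, y_i⟩ = 0 for i = 1,…,k, A* y_{k+1} = 0 and ⟨b, y_{k+1}⟩ = −1. Then the system { x ∈ ℝ^m : b − Ax ∈ K } is infeasible. -/
open scoped RealInnerProductSpace

variable {Y : Type*} [NormedAddCommGroup Y] [InnerProductSpace ℝ Y] [FiniteDimensional ℝ Y]

/-- The dual cone of a set `S`: all vectors having nonnegative inner product with every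
element of `S`. -/
def dualSet (S : Set Y) : Set Y := {y | ∀ x ∈ S, 0 ≤ ⟪x, y⟫}

/-- The orthogonal complement (as a set) of the span of `S`. -/
def perpSet (S : Set Y) : Set Y := {y | ∀ x ∈ S, ⟪x, y⟫ = 0}

/-- `K ∩ y₁^⊥ ∩ … ∩ y_{i-1}^⊥`. -/
def frCut {k : ℕ} (K : Set Y) (y : Fin k → Y) (i : Fin k) : Set Y :=
  K ∩ {x | ∀ j : Fin k, j < i → ⟪y j, x⟫ = 0}

/-- Membership in the order-`k` facial reduction cone `FR_k(K)`:
`y₁ ∈ K*` and `y_i ∈ (K ∩ y₁^⊥ ∩ … ∩ y_{i-1}^⊥)*` for each `i`. -/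
def IsFRSeq {k : ℕ} (K : Set Y) (y : Fin k → Y) : Prop :=
  ∀ i : Fin k, y i ∈ dualSet (frCut K y i)

section

variable {E ι : Type*} [NormedAddCommGroup E] [InnerProductSpace ℝ E] [Fintype ι]

theorem inner_sub_sum_smul_of_forall_inner_eq_zero {a : ι → E} {b v : E} {x : ι → ℝ}
    (ha : ∀ j, ⟪a j, v⟫ = 0) : ⟪b - ∑ j, x j • a j, v⟫ = ⟪b, v⟫ := by
  simp [inner_sub_left, sum_inner, real_inner_smul_left, ha]

end

omit [FiniteDimensional ℝ Y] in
theorem IsFRSeq.inner_nonneg {K : Set Y} {k : ℕ} {y : Fin k → Y} (hy : IsFRSeq K y) {s : Y}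
    (hs : s ∈ K) (i : Fin k) (hperp : ∀ j < i, ⟪y j, s⟫ = 0) : 0 ≤ ⟪s, y i⟫ :=
  hy i s ⟨hs, hperp⟩

theorem stmt_8_general (K : Set Y)
    (m k : ℕ) (a : Fin m → Y) (b : Y)
    (y : Fin (k + 1) → Y) (hy : IsFRSeq K y)
    (hzero : ∀ i : Fin (k + 1), (i : ℕ) < k →
      (∀ j : Fin m, ⟪a j, y i⟫ = 0) ∧ ⟪b, y i⟫ = 0)
    (hlastA : ∀ j : Fin m, ⟪a j, y (Fin.last k)⟫ = 0)
    (hlastb : ⟪b, y (Fin.last k)⟫ = -1) :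
    ¬ ∃ x : Fin m → ℝ, b - ∑ j, x j • a j ∈ K := by
  rintro ⟨x, hx⟩
  have hperp : ∀ j < Fin.last k, ⟪y j, b - ∑ i, x i • a i⟫ = 0 := fun j hj => by
    rw [real_inner_comm, inner_sub_sum_smul_of_forall_inner_eq_zero (hzero j hj).1, (hzero j hj).2]
  have hnonneg := hy.inner_nonneg hx (Fin.last k) hperp
  rw [inner_sub_sum_smul_of_forall_inner_eq_zero hlastA, hlastb] at hnonneg
  norm_num at hnonneg

/-- If `(y_1,...,y_{k+1})` is in `FR_{k+1}(K)` with `A* y_i = 0, ⟨b,y_i⟩ = 0` for `i ≤ k`,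
`A* y_{k+1} = 0` and `⟨b, y_{k+1}⟩ = -1`, then the system `b - Ax ∈ K` is infeasible. -/
theorem stmt_8 (K : Set Y) (hKcl : IsClosed K) (hKconv : Convex ℝ K)
    (hKcone : ∀ c : ℝ, 0 ≤ c → ∀ x ∈ K, c • x ∈ K) (hK0 : (0 : Y) ∈ K)
    (m k : ℕ) (a : Fin m → Y) (b : Y)
    (y : Fin (k + 1) → Y) (hy : IsFRSeq K y)
    (hzero : ∀ i : Fin (k + 1), (i : ℕ) < k →
      (∀ j : Fin m, ⟪a j, y i⟫ = 0) ∧ ⟪b, y i⟫ = 0)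
    (hlastA : ∀ j : Fin m, ⟪a j, y (Fin.last k)⟫ = 0)
    (hlastb : ⟪b, y (Fin.last k)⟫ = -1) :
    ¬ ∃ x : Fin m → ℝ, b - ∑ j, x j • a j ∈ K :=
  stmt_8_general K m k a b y hy hzero hlastA hlastb
end

section
/- Let K be a closed convex cone in Y and F a face of K such that K* + F^⊥ is not closed. Then there exist (a_1,…,a_{k+1}) ∈ FR_{k+1}(K*) with k ≥ 1 and (y_1,…,y_{ℓ+1}) ∈ FR_{ℓ+1}(K) with ℓ ≥ 1 such that a_i ∈ span(F) for all i, y_j ∈ F^⊥ for j = 1,…,ℓ, ⟨a_i, y_{ℓ+1}⟩ = 0 for i ≤ k, and ⟨a_{k+1}, y_{ℓ+1}⟩ = −1. Conversely, the existence of such sequences implies K* + F^⊥ is not closed. -/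
open scoped RealInnerProductSpace

variable {Y : Type*} [NormedAddCommGroup Y] [InnerProductSpace ℝ Y] [FiniteDimensional ℝ Y]

/-- `F` is a face of the cone `K`. -/
def IsFace (K F : Set Y) : Prop :=
  F ⊆ K ∧ Convex ℝ F ∧
    ∀ y z : Y, y ∈ K → z ∈ K → (2⁻¹ : ℝ) • (y + z) ∈ F → y ∈ F ∧ z ∈ F

/-!
Write `M = K* + F^⊥`. As `F` is a face of the closed cone `K`, `M* = K ∩ span F = F`, hence
`closure M = F*`.

If `M` is not closed, pick `z ∈ F* \ M`. Facial reduction on `M` produces a certificate `a` of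
`z ∉ M`: while `z` lies in the closure of the current cone, the segment `[0, z]` is separated from
its relative interior and the cone is cut by the separating hyperplane, which lowers the dimension
of its span; once `z` has left the closure, a strict separation ends the sequence. The subspace
`F^⊥ ⊆ M` lies in every cut, so each `a_i` is orthogonal to `F^⊥`, i.e. `a_i ∈ span F`. Facial
reduction on `K`, separating the face `F` from the relative interior each time, produces
`y_j ∈ F^⊥` cutting `K` down to `F`, after which `z ∈ F*` is an admissible last step. Neither
sequence can be trivial, since `z ∈ closure M` and `z ∉ K*`.

Conversely, the last `y` lies in `F* = closure M`. Were `M` closed, it would split as `u + v` with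
`u ∈ K*`, `v ∈ F^⊥`, and the `a_i ∈ span F` would pair with `u` as with `y`, certifying `u ∉ K*`.
-/

open Submodule (span)
open scoped Pointwise

section Duality

variable {E : Type*} [NormedAddCommGroup E] [InnerProductSpace ℝ E]

lemma dualSet_anti {S T : Set E} (h : S ⊆ T) : dualSet T ⊆ dualSet S :=
  fun _ hy x hx => hy x (h hx)

lemma isClosed_dualSet (S : Set E) : IsClosed (dualSet S) := by
  simpa only [dualSet, Set.ofPred_forall] using
    isClosed_biInter fun x _ => isClosed_le continuous_const (continuous_const.inner continuous_id)

lemma dualSet_closure (S : Set E) : dualSet (closure S) = dualSet S := by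
  refine (dualSet_anti subset_closure).antisymm fun y hy => ?_
  have hS : S ⊆ {x | 0 ≤ ⟪x, y⟫} := hy
  exact fun x hx => closure_minimal hS (isClosed_le continuous_const
    (continuous_id.inner continuous_const)) hx

lemma dualSet_submodule (W : Submodule ℝ E) : dualSet (W : Set E) = (Wᗮ : Set E) := by
  ext y
  refine ⟨fun hy => (Submodule.mem_orthogonal W y).2 fun u hu => ?_, fun hy x hx =>
    (Submodule.inner_right_of_mem_orthogonal hx hy).ge⟩
  have := hy (-u) (neg_mem hu)
  rw [inner_neg_left] at this
  exact le_antisymm (by linarith) (hy u hu)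

lemma perpSet_eq_orthogonal (S : Set E) : perpSet S = ((span ℝ S)ᗮ : Set E) := by
  ext y
  simp only [perpSet, Set.mem_ofPred_eq, SetLike.mem_coe, Submodule.mem_orthogonal]
  refine ⟨fun hy u hu => ?_, fun hy x hx => hy x (Submodule.subset_span hx)⟩
  induction hu using Submodule.span_induction with
  | mem x hx => exact hy x hx
  | zero => exact inner_zero_left y
  | add x z _ _ hx hz => rw [inner_add_left, hx, hz, add_zero]
  | smul c x _ hx => rw [inner_smul_left, hx, mul_zero]

lemma dualSet_subset_dualSet_add_perpSet (S T : Set E) : dualSet S ⊆ dualSet S + perpSet T :=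
  fun u hu => ⟨u, hu, 0, fun _ _ => inner_zero_right _, add_zero u⟩

lemma perpSet_subset_dualSet_add_perpSet (S T : Set E) : perpSet T ⊆ dualSet S + perpSet T :=
  fun v hv => ⟨0, fun _ _ => (inner_zero_right _).ge, v, hv, zero_add v⟩

lemma exists_pointedCone_coe_eq_dualSet_add_perpSet (S T : Set E) :
    ∃ M : PointedCone ℝ E, (M : Set E) = dualSet S + perpSet T :=
  ⟨PointedCone.dual (innerₗ E) S ⊔ (span ℝ T)ᗮ, by
    rw [Submodule.coe_sup, perpSet_eq_orthogonal]; rfl⟩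

end Duality

section FacialReductionSequences

variable {E : Type*} [NormedAddCommGroup E] [InnerProductSpace ℝ E] {C : Set E} {k : ℕ}

lemma IsFRSeq.anti {S : Set E} (hSC : S ⊆ C) {a : Fin k → E} (ha : IsFRSeq C a) :
    IsFRSeq S a :=
  fun i => dualSet_anti (Set.inter_subset_inter_left _ hSC) (ha i)

lemma frCut_cons_zero (a₀ : E) (a : Fin k → E) :
    frCut C (Fin.cons a₀ a : Fin (k + 1) → E) 0 = C := by
  simp [frCut]

lemma frCut_cons_succ (a₀ : E) (a : Fin k → E) (i : Fin k) :
    frCut C (Fin.cons a₀ a : Fin (k + 1) → E) i.succ = frCut (C ∩ (ℝ ∙ a₀)ᗮ) a i := by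
  ext x
  simp [frCut, Fin.forall_fin_succ, Submodule.mem_orthogonal_singleton_iff_inner_right, and_assoc]

lemma isFRSeq_cons {a₀ : E} {a : Fin k → E} :
    IsFRSeq C (Fin.cons a₀ a : Fin (k + 1) → E) ↔
      a₀ ∈ dualSet C ∧ IsFRSeq (C ∩ (ℝ ∙ a₀)ᗮ) a := by
  simp [IsFRSeq, Fin.forall_fin_succ, frCut_cons_zero, frCut_cons_succ]

lemma IsFRSeq.head_mem_dualSet {a : Fin (k + 1) → E} (ha : IsFRSeq C a) : a 0 ∈ dualSet C :=
  fun x hx => ha 0 x (Set.mem_inter hx fun j hj => absurd hj (Fin.not_lt_zero j))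

lemma IsFRSeq.mem_orthogonal {a : Fin k → E} (ha : IsFRSeq C a) {W : Submodule ℝ E}
    (hW : (W : Set E) ⊆ C) (i : Fin k) : a i ∈ Wᗮ := by
  induction i using WellFoundedLT.induction with
  | _ i ih =>
  rw [← SetLike.mem_coe, ← dualSet_submodule]
  exact dualSet_anti (fun w hw => Set.mem_inter (hW hw) fun j hj =>
    Submodule.inner_left_of_mem_orthogonal hw (ih j hj)) (ha i)

lemma IsFRSeq.notMem {a : Fin (k + 1) → E} (ha : IsFRSeq C a) {w : E}
    (hzero : ∀ i : Fin (k + 1), (i : ℕ) < k → ⟪a i, w⟫ = 0) (hlast : ⟪a (Fin.last k), w⟫ < 0) :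
    w ∉ C := fun hw => by
  have := ha (Fin.last k) w (Set.mem_inter hw fun j hj => hzero j hj)
  rw [real_inner_comm] at this
  linarith

end FacialReductionSequences

lemma exists_pos_add_smul_mem_of_mem_interior {E : Type*} [NormedAddCommGroup E]
    [NormedSpace ℝ E] {s : Set E} {x : E} (hx : x ∈ interior s) (v : E) :
    ∃ ε : ℝ, 0 < ε ∧ x + ε • v ∈ s := by
  have hlim : Filter.Tendsto (fun ε : ℝ => x + ε • v) (nhdsWithin 0 (Set.Ioi 0)) (nhds x) := by
    have hc : Continuous fun ε : ℝ => x + ε • v := by fun_prop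
    simpa using (hc.tendsto 0).mono_left nhdsWithin_le_nhds
  obtain ⟨ε, hε, hmem⟩ :=
    ((hlim.eventually (mem_interior_iff_mem_nhds.1 hx)).and self_mem_nhdsWithin).exists
  exact ⟨ε, hmem, hε⟩

lemma finrank_span_inter_orthogonal_lt {E : Type*} [NormedAddCommGroup E]
    [InnerProductSpace ℝ E] [FiniteDimensional ℝ E] {C : Set E} {a x : E} (hx : x ∈ C)
    (hax : ⟪a, x⟫ ≠ 0) :
    Module.finrank ℝ (span ℝ (C ∩ (ℝ ∙ a)ᗮ)) < Module.finrank ℝ (span ℝ C) := by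
  refine Submodule.finrank_lt_finrank_of_lt <| lt_of_le_of_lt (b := span ℝ C ⊓ (ℝ ∙ a)ᗮ)
    (Submodule.span_le.2 fun y hy => ⟨Submodule.subset_span hy.1, hy.2⟩) (inf_lt_left.2 ?_)
  exact fun h => hax (Submodule.mem_orthogonal_singleton_iff_inner_right.1
    (h (Submodule.subset_span hx)))

namespace PointedCone

section VectorSpace

variable {E : Type*} [AddCommGroup E] [Module ℝ E]

def ofConvex (K : Set E) (hconv : Convex ℝ K) (hcone : ∀ c : ℝ, 0 ≤ c → ∀ x ∈ K, c • x ∈ K)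
    (h0 : (0 : E) ∈ K) : PointedCone ℝ E where
  carrier := K
  add_mem' {x y} hx hy := by
    have := hcone 2 zero_le_two _ (hconv hx hy (by norm_num : (0 : ℝ) ≤ 2⁻¹)
      (by norm_num : (0 : ℝ) ≤ 2⁻¹) (by norm_num))
    rwa [smul_add, smul_smul, smul_smul, mul_inv_cancel₀ two_ne_zero, one_smul, one_smul] at this
  zero_mem' := h0
  smul_mem' c x hx := hcone c c.2 x hx

lemma exists_sub_eq_of_mem_span (F : PointedCone ℝ E) {x : E} (hx : x ∈ span ℝ (F : Set E)) :
    ∃ f₁ ∈ F, ∃ f₂ ∈ F, f₁ - f₂ = x := by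
  induction hx using Submodule.span_induction with
  | mem x hx => exact ⟨x, hx, 0, F.zero_mem, sub_zero x⟩
  | zero => exact ⟨0, F.zero_mem, 0, F.zero_mem, sub_zero 0⟩
  | add x y _ _ hx hy =>
    obtain ⟨f₁, hf₁, f₂, hf₂, rfl⟩ := hx
    obtain ⟨g₁, hg₁, g₂, hg₂, rfl⟩ := hy
    exact ⟨f₁ + g₁, F.add_mem hf₁ hg₁, f₂ + g₂, F.add_mem hf₂ hg₂, add_sub_add_comm ..⟩
  | smul c x _ hx =>
    obtain ⟨f₁, hf₁, f₂, hf₂, rfl⟩ := hx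
    rcases le_total 0 c with hc | hc
    · exact ⟨c • f₁, F.smul_mem hc hf₁, c • f₂, F.smul_mem hc hf₂, (smul_sub c f₁ f₂).symm⟩
    · refine ⟨(-c) • f₂, F.smul_mem (neg_nonneg.2 hc) hf₂, (-c) • f₁,
        F.smul_mem (neg_nonneg.2 hc) hf₁, ?_⟩
      rw [neg_smul, neg_smul, neg_sub_neg, smul_sub]

lemma IsFaceOf.mem_of_mem_span {C F : PointedCone ℝ E} (hF : F.IsFaceOf C) {x : E} (hxC : x ∈ C)
    (hxF : x ∈ span ℝ (F : Set E)) : x ∈ F := by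
  obtain ⟨f₁, hf₁, f₂, hf₂, rfl⟩ := F.exists_sub_eq_of_mem_span hxF
  exact hF.mem_of_add_mem_left hxC (hF.le hf₂) (by rwa [sub_add_cancel])

end VectorSpace

section RelativeInterior

variable {E : Type*} [NormedAddCommGroup E] [InnerProductSpace ℝ E]

/-- `C` thickened by the orthogonal complement of its span. It has nonempty interior and meets
`span ℝ C` exactly in `C`, so its interior plays the role of the relative interior of `C`. -/
noncomputable def orthThickening (C : PointedCone ℝ E) : PointedCone ℝ E :=
  C ⊔ (span ℝ (C : Set E))ᗮ

lemma mem_of_mem_orthThickening {C : PointedCone ℝ E} {x : E} (hx : x ∈ C.orthThickening)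
    (hxC : x ∈ span ℝ (C : Set E)) : x ∈ C := by
  obtain ⟨c, hc, p, hp, rfl⟩ := Submodule.mem_sup.1 hx
  have hp' : p ∈ span ℝ (C : Set E) := by
    simpa using sub_mem hxC (Submodule.subset_span hc)
  rwa [inner_self_eq_zero.1 (Submodule.inner_right_of_mem_orthogonal hp' hp), add_zero]

lemma IsFaceOf.disjoint_interior_orthThickening {C F : PointedCone ℝ E} (hF : F.IsFaceOf C)
    (hne : F ≠ C) : Disjoint (F : Set E) (interior (C.orthThickening : Set E)) := by
  rw [Set.disjoint_left]
  refine fun x hxF hx => hne (hF.le.antisymm fun y hy => ?_)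
  obtain ⟨ε, hε, hmem⟩ := exists_pos_add_smul_mem_of_mem_interior hx (-y)
  have hxy : x + ε • -y ∈ C := mem_of_mem_orthThickening hmem <|
    (span ℝ (C : Set E)).add_mem (Submodule.subset_span (hF.le hxF))
      ((span ℝ (C : Set E)).smul_mem ε ((span ℝ (C : Set E)).neg_mem (Submodule.subset_span hy)))
  exact hF.mem_of_smul_add_mem hy hxy hε (by simpa using hxF)

variable [FiniteDimensional ℝ E] (C : PointedCone ℝ E)

lemma interior_orthThickening_nonempty : (interior (C.orthThickening : Set E)).Nonempty := by
  have hspan : span ℝ (C.orthThickening : Set E) = ⊤ := by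
    refine eq_top_iff.2 ((Submodule.sup_orthogonal_of_hasOrthogonalProjection
      (K := span ℝ (C : Set E))).ge.trans (sup_le ?_ ?_))
    · exact Submodule.span_mono fun x hx => Submodule.mem_sup_left hx
    · exact fun x hx => Submodule.subset_span (Submodule.mem_sup_right hx)
  rw [C.orthThickening.convex.interior_nonempty_iff_affineSpan_eq_top,
    AffineSubspace.affineSpan_eq_top_iff_vectorSpan_eq_top_of_nonempty ℝ E E
      ⟨0, C.orthThickening.zero_mem⟩,
    vectorSpan_eq_span_vsub_set_right ℝ C.orthThickening.zero_mem]
  simpa using hspan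

lemma closure_subset_span : closure (C : Set E) ⊆ span ℝ (C : Set E) :=
  closure_minimal Submodule.subset_span (Submodule.closed_of_finiteDimensional _)

lemma disjoint_segment_interior_orthThickening {w : E} (hw : w ∉ C)
    (hwC : w ∈ closure (C : Set E)) :
    Disjoint (segment ℝ 0 w) (interior (C.orthThickening : Set E)) := by
  rw [Set.disjoint_left]
  rintro _ ⟨s, t, -, ht, -, rfl⟩ hint
  obtain ⟨ε, hε, hmem⟩ := exists_pos_add_smul_mem_of_mem_interior hint w
  rw [smul_zero, zero_add, ← add_smul] at hmem
  have : w ∈ C.orthThickening := by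
    simpa [smul_smul, (by positivity : t + ε ≠ 0)] using
      C.orthThickening.smul_mem (inv_nonneg.2 (by positivity : 0 ≤ t + ε)) hmem
  exact hw (mem_of_mem_orthThickening this (C.closure_subset_span hwC))

theorem exists_mem_dualSet_perpSet_of_disjoint {G : Set E} (hG : Convex ℝ G) (hG0 : (0 : E) ∈ G)
    (hGC : G ⊆ closure C) (hdisj : Disjoint G (interior (C.orthThickening : Set E))) :
    ∃ a ∈ dualSet (C : Set E), a ∈ perpSet G ∧ ∃ x ∈ C, 0 < ⟪a, x⟫ := by
  set D := C.orthThickening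
  obtain ⟨x₀, hx₀⟩ := C.interior_orthThickening_nonempty
  obtain ⟨f, u, hfu, huf⟩ :=
    geometric_hahn_banach_open D.convex.interior isOpen_interior hG hdisj.symm
  have hfD : ∀ x ∈ closure (D : Set E), f x ≤ u := by
    rw [← D.convex.closure_interior_eq_closure_of_nonempty_interior ⟨x₀, hx₀⟩]
    exact closure_minimal (fun x hx => (hfu x hx).le) (isClosed_le f.continuous continuous_const)
  have hu : u = 0 := le_antisymm (by simpa using huf 0 hG0)
    (by simpa using hfD 0 (subset_closure D.zero_mem))
  subst hu
  have hfD' : ∀ x ∈ D, f x ≤ 0 := fun x hx => hfD x (subset_closure hx)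
  obtain ⟨c, hc, p, hp, rfl⟩ := Submodule.mem_sup.1 (interior_subset hx₀)
  -- `f ≤ 0` on the subspace `(span ℝ C)ᗮ ⊆ D`, hence `f = 0` there
  have hfp : f p = 0 := le_antisymm (hfD' p (Submodule.mem_sup_right hp))
    (by simpa using hfD' (-p) (Submodule.mem_sup_right ((span ℝ (C : Set E))ᗮ.neg_mem hp)))
  refine ⟨(InnerProductSpace.toDual ℝ E).symm (-f), fun x hx => ?_, fun g hg => ?_, c, hc, ?_⟩
  · rw [real_inner_comm, InnerProductSpace.toDual_symm_apply]
    simpa using hfD' x (Submodule.mem_sup_left hx)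
  · rw [real_inner_comm, InnerProductSpace.toDual_symm_apply]
    have := hfD g (closure_mono (fun x hx => Submodule.mem_sup_left hx) (hGC hg))
    simpa using le_antisymm this (huf g hg)
  · rw [InnerProductSpace.toDual_symm_apply]
    simpa [hfp] using hfu _ hx₀

end RelativeInterior

section FacialReduction

variable {E : Type*} [NormedAddCommGroup E] [InnerProductSpace ℝ E] [FiniteDimensional ℝ E]

lemma exists_mem_dualSet_inner_eq_neg_one (C : PointedCone ℝ E) {w : E}
    (hw : w ∉ closure (C : Set E)) : ∃ a ∈ dualSet (C : Set E), ⟪a, w⟫ = -1 := by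
  obtain ⟨a, ha, haw⟩ := ProperCone.hyperplane_separation' (Submodule.closure C) hw
  refine ⟨(-⟪w, a⟫)⁻¹ • a, fun x hx => ?_, ?_⟩
  · exact mul_nonneg (inv_nonneg.2 (by linarith)) (ha x (subset_closure hx)) |>.trans_eq
      (real_inner_smul_right _ _ _).symm
  · rw [real_inner_smul_left, real_inner_comm w a, inv_mul_eq_div, div_neg, div_self haw.ne]

theorem exists_isFRSeq_of_notMem (C : PointedCone ℝ E) {w : E} (hw : w ∉ C) :
    ∃ (k : ℕ) (a : Fin (k + 1) → E), IsFRSeq (C : Set E) a ∧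
      (∀ i : Fin (k + 1), (i : ℕ) < k → ⟪a i, w⟫ = 0) ∧ ⟪a (Fin.last k), w⟫ = -1 := by
  induction hn : Module.finrank ℝ (span ℝ (C : Set E)) using Nat.strong_induction_on
    generalizing C with
  | _ n ih =>
  by_cases hwC : w ∈ closure (C : Set E)
  · obtain ⟨a₀, ha₀, ha₀w, x, hxC, hx⟩ := C.exists_mem_dualSet_perpSet_of_disjoint
      (convex_segment 0 w) (left_mem_segment ℝ 0 w)
      (C.convex.closure.segment_subset (subset_closure C.zero_mem) hwC)
      (C.disjoint_segment_interior_orthThickening hw hwC)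
    obtain ⟨k, a, ha, hzero, hlast⟩ := ih _ (hn ▸ finrank_span_inter_orthogonal_lt hxC hx.ne')
      (C ⊓ (ℝ ∙ a₀)ᗮ) (fun h => hw h.1) rfl
    refine ⟨k + 1, Fin.cons a₀ a, isFRSeq_cons.2 ⟨ha₀, ha⟩, fun i hi => ?_, by simpa using hlast⟩
    induction i using Fin.cases with
    | zero => simpa [real_inner_comm] using ha₀w w (right_mem_segment ℝ 0 w)
    | succ i => simpa using hzero i (by simpa using hi)
  · obtain ⟨a₀, ha₀, ha₀w⟩ := C.exists_mem_dualSet_inner_eq_neg_one hwC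
    exact ⟨0, fun _ => a₀, fun _ x hx => ha₀ x hx.1, fun i hi => absurd hi (by simp), ha₀w⟩

/-- The first `l` vectors cut `C` down to `F`, so any `z ∈ F*` can follow them. -/
theorem IsFaceOf.exists_isFRSeq {C F : PointedCone ℝ E} (hF : F.IsFaceOf C) {z : E}
    (hz : z ∈ dualSet (F : Set E)) :
    ∃ (l : ℕ) (y : Fin (l + 1) → E), IsFRSeq (C : Set E) y ∧
      (∀ j : Fin (l + 1), (j : ℕ) < l → y j ∈ perpSet (F : Set E)) ∧ y (Fin.last l) = z := by
  induction hn : Module.finrank ℝ (span ℝ (C : Set E)) using Nat.strong_induction_on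
    generalizing C with
  | _ n ih =>
  by_cases hFC : F = C
  · subst hFC
    exact ⟨0, fun _ => z, fun _ x hx => hz x hx.1, fun j hj => absurd hj (by simp), rfl⟩
  obtain ⟨y₀, hy₀, hy₀F, x, hxC, hx⟩ := C.exists_mem_dualSet_perpSet_of_disjoint F.convex
    F.zero_mem (fun x hx => subset_closure (hF.le hx)) (hF.disjoint_interior_orthThickening hFC)
  have hF' : F.IsFaceOf (C ⊓ (ℝ ∙ y₀)ᗮ) :=
    ⟨le_inf hF.le fun f hf => Submodule.mem_orthogonal_singleton_iff_inner_right.2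
      (by rw [real_inner_comm]; exact hy₀F f hf), fun hx hy ha h => hF.2 hx.1 hy.1 ha h⟩
  obtain ⟨l, y, hy, hyF, hyz⟩ :=
    ih _ (hn ▸ finrank_span_inter_orthogonal_lt hxC hx.ne') hF' rfl
  refine ⟨l + 1, Fin.cons y₀ y, isFRSeq_cons.2 ⟨hy₀, hy⟩, fun j hj => ?_, by simpa using hyz⟩
  induction j using Fin.cases with
  | zero => exact hy₀F
  | succ j => simpa using hyF j (by simpa using hj)

end FacialReduction

end PointedCone

section DualPlusPerp

variable {E : Type*} [NormedAddCommGroup E] [InnerProductSpace ℝ E]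

def HasFRCertificate (K F : Set E) : Prop :=
  ∃ (k l : ℕ) (a : Fin (k + 1) → E) (y : Fin (l + 1) → E),
    1 ≤ k ∧ 1 ≤ l ∧ IsFRSeq (dualSet K) a ∧ IsFRSeq K y ∧
    (∀ i, a i ∈ span ℝ F) ∧
    (∀ j : Fin (l + 1), (j : ℕ) < l → y j ∈ perpSet F) ∧
    (∀ i : Fin (k + 1), (i : ℕ) < k → ⟪a i, y (Fin.last l)⟫ = 0) ∧
    ⟪a (Fin.last k), y (Fin.last l)⟫ = -1

variable [FiniteDimensional ℝ E] {K F : PointedCone ℝ E}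

theorem PointedCone.IsFaceOf.closure_dualSet_add_perpSet (hK : IsClosed (K : Set E))
    (hF : F.IsFaceOf K) :
    closure (dualSet (K : Set E) + perpSet (F : Set E)) = dualSet (F : Set E) := by
  refine (closure_minimal ?_ (isClosed_dualSet _)).antisymm fun w hw => by_contra fun hwM => ?_
  · rintro _ ⟨u, hu, v, hv, rfl⟩ f hf
    rw [inner_add_right, hv f hf, add_zero]
    exact hu f (hF.le hf)
  obtain ⟨M, hM⟩ := exists_pointedCone_coe_eq_dualSet_add_perpSet (K : Set E) (F : Set E)
  obtain ⟨a, ha, haw⟩ := M.exists_mem_dualSet_inner_eq_neg_one (hM ▸ hwM)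
  rw [hM] at ha
  have haK : a ∈ K := by
    change a ∈ ((⟨K, hK⟩ : ProperCone ℝ E) : Set E)
    rw [← ProperCone.innerDual_innerDual ⟨K, hK⟩]
    exact fun u hu => ha u (dualSet_subset_dualSet_add_perpSet _ _ hu)
  have haF : a ∈ span ℝ (F : Set E) := by
    rw [← Submodule.orthogonal_orthogonal (span ℝ (F : Set E)), ← SetLike.mem_coe,
      ← dualSet_submodule, ← perpSet_eq_orthogonal]
    exact dualSet_anti (perpSet_subset_dualSet_add_perpSet _ _) ha
  linarith [hw a (hF.mem_of_mem_span haK haF)]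

theorem PointedCone.IsFaceOf.hasFRCertificate_of_not_isClosed (hK : IsClosed (K : Set E))
    (hF : F.IsFaceOf K) (hM : ¬ IsClosed (dualSet (K : Set E) + perpSet (F : Set E))) :
    HasFRCertificate (K : Set E) (F : Set E) := by
  obtain ⟨z, hzcl, hzM⟩ := Set.not_subset.1 (mt closure_subset_iff_isClosed.1 hM)
  obtain ⟨M, hMc⟩ := exists_pointedCone_coe_eq_dualSet_add_perpSet (K : Set E) (F : Set E)
  rw [← hMc] at hzcl hzM
  obtain ⟨_ | k, a, ha, hazero, halast⟩ := M.exists_isFRSeq_of_notMem hzM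
  · -- a single vector of `M*` cannot certify `z ∉ M`, as `z ∈ closure M`
    have := ((dualSet_closure (M : Set E)).symm ▸ ha.head_mem_dualSet) z hzcl
    rw [real_inner_comm] at this
    simp only [Fin.last_zero] at halast
    linarith
  rw [hMc, hF.closure_dualSet_add_perpSet hK] at hzcl
  obtain ⟨_ | l, y, hy, hyF, rfl⟩ := hF.exists_isFRSeq hzcl
  · -- `l = 0` would give `z = y 0 ∈ K* ⊆ M`
    exact (hzM (hMc ▸ dualSet_subset_dualSet_add_perpSet _ _ hy.head_mem_dualSet)).elim
  refine ⟨k + 1, l + 1, a, y, le_add_self, le_add_self,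
    ha.anti (hMc ▸ dualSet_subset_dualSet_add_perpSet _ _), hy, fun i => ?_, hyF, hazero, halast⟩
  rw [← Submodule.orthogonal_orthogonal (span ℝ (F : Set E))]
  refine ha.mem_orthogonal (fun v hv => ?_) i
  rw [hMc]
  exact perpSet_subset_dualSet_add_perpSet _ _ (by rwa [perpSet_eq_orthogonal])

theorem PointedCone.IsFaceOf.not_isClosed_of_hasFRCertificate (hK : IsClosed (K : Set E))
    (hF : F.IsFaceOf K) (h : HasFRCertificate (K : Set E) (F : Set E)) :
    ¬ IsClosed (dualSet (K : Set E) + perpSet (F : Set E)) := by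
  obtain ⟨k, l, a, y, -, -, ha, hy, haF, hyF, hazero, halast⟩ := h
  intro hM
  have hyF' : y (Fin.last l) ∈ dualSet (F : Set E) := dualSet_anti (T := frCut _ y _)
    (fun f hf => Set.mem_inter (hF.le hf) fun j hj => (real_inner_comm _ _).trans (hyF j hj f hf))
    (hy (Fin.last l))
  rw [← hF.closure_dualSet_add_perpSet hK, hM.closure_eq] at hyF'
  obtain ⟨u, hu, v, hv, huv⟩ := hyF'
  rw [perpSet_eq_orthogonal] at hv
  have hau : ∀ i, ⟪a i, u⟫ = ⟪a i, y (Fin.last l)⟫ := fun i => by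
    rw [← huv, inner_add_right, Submodule.inner_right_of_mem_orthogonal (haF i) hv, add_zero]
  exact ha.notMem (fun i hi => (hau i).trans (hazero i hi))
    (by rw [hau, halast]; exact neg_one_lt_zero) hu

end DualPlusPerp

section SetCones

variable {E : Type*} [NormedAddCommGroup E] [InnerProductSpace ℝ E] {K F : Set E}
  (hF : IsFace K F) (hKcone : ∀ c : ℝ, 0 ≤ c → ∀ x ∈ K, c • x ∈ K) (hK0 : (0 : E) ∈ K)
include hF hKcone hK0

lemma IsFace.two_smul_mem {x : E} (hx : x ∈ F) : (2 : ℝ) • x ∈ F :=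
  (hF.2.2 _ 0 (hKcone 2 zero_le_two x (hF.1 hx)) hK0 (by simpa [smul_smul] using hx)).1

lemma IsFace.zero_mem (hne : F.Nonempty) : (0 : E) ∈ F := by
  obtain ⟨x, hx⟩ := hne
  exact (hF.2.2 _ 0 (hKcone 2 zero_le_two x (hF.1 hx)) hK0 (by simpa [smul_smul] using hx)).2

lemma IsFace.smul_mem (hF0 : (0 : E) ∈ F) {x : E} (hx : x ∈ F) {t : ℝ} (ht : 0 ≤ t) :
    t • x ∈ F := by
  obtain ⟨n, hn⟩ := pow_unbounded_of_one_lt t one_lt_two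
  induction n generalizing t with
  | zero => exact hF.2.1.smul_mem_of_zero_mem hF0 hx ⟨ht, by simpa using hn.le⟩
  | succ n ih =>
    have := hF.two_smul_mem hKcone hK0 (ih (div_nonneg ht zero_le_two) (by
      rw [pow_succ] at hn; linarith))
    rwa [smul_smul, mul_div_cancel₀ t two_ne_zero] at this

lemma IsFace.exists_isFaceOf (hKconv : Convex ℝ K) (hne : F.Nonempty) :
    ∃ Kc Fc : PointedCone ℝ E, (Kc : Set E) = K ∧ (Fc : Set E) = F ∧ Fc.IsFaceOf Kc := by
  have hF0 := hF.zero_mem hKcone hK0 hne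
  refine ⟨.ofConvex K hKconv hKcone hK0, .ofConvex F hF.2.1
    (fun c hc x hx => hF.smul_mem hKcone hK0 hF0 hx hc) hF0, rfl, rfl, fun x hx => hF.1 hx, ?_⟩
  intro x y a (hx : x ∈ K) (hy : y ∈ K) ha (hxy : a • x + y ∈ F)
  show x ∈ F
  -- `a • x + y` is the midpoint of `(2 * a) • x` and `2 • y`
  have h2ax : (2 * a) • x ∈ F := (hF.2.2 _ _ (hKcone _ (by positivity) x hx)
    (hKcone 2 zero_le_two y hy) (by simpa [smul_add, smul_smul] using hxy)).1
  have := hF.smul_mem hKcone hK0 hF0 h2ax (inv_nonneg.2 (by positivity : 0 ≤ 2 * a))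
  rwa [smul_smul, inv_mul_cancel₀ (by positivity), one_smul] at this

end SetCones

open scoped Pointwise in
/-- Exact characterization of when `K* + F^⊥` is not closed, for a face `F` of `K`, via
facial reduction sequences. -/
theorem stmt_16 (K : Set Y) (hKcl : IsClosed K) (hKconv : Convex ℝ K)
    (hKcone : ∀ c : ℝ, 0 ≤ c → ∀ x ∈ K, c • x ∈ K) (hK0 : (0 : Y) ∈ K)
    (F : Set Y) (hF : IsFace K F) :
    ¬ IsClosed (dualSet K + perpSet F) ↔
      ∃ (k l : ℕ) (a : Fin (k + 1) → Y) (y : Fin (l + 1) → Y),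
        1 ≤ k ∧ 1 ≤ l ∧ IsFRSeq (dualSet K) a ∧ IsFRSeq K y ∧
        (∀ i, a i ∈ Submodule.span ℝ F) ∧
        (∀ j : Fin (l + 1), (j : ℕ) < l → y j ∈ perpSet F) ∧
        (∀ i : Fin (k + 1), (i : ℕ) < k → ⟪a i, y (Fin.last l)⟫ = 0) ∧
        ⟪a (Fin.last k), y (Fin.last l)⟫ = -1 := by
  rcases F.eq_empty_or_nonempty with rfl | hne
  · refine iff_of_false (not_not.2 ?_) ?_
    · convert isClosed_univ
      exact Set.eq_univ_of_forall fun x =>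
        perpSet_subset_dualSet_add_perpSet K ∅ fun _ h => absurd h (Set.notMem_empty _)
    · rintro ⟨k, l, a, y, -, -, -, -, ha, -, -, hlast⟩
      simp_all
  obtain ⟨K, F, rfl, rfl, hKF⟩ := hF.exists_isFaceOf hKcone hK0 hKconv hne
  exact ⟨hKF.hasFRCertificate_of_not_isClosed hKcl, hKF.not_isClosed_of_hasFRCertificate hKcl⟩
end
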